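/- Let f, g and h be entire functions given by everywhere absolutely convergent vector valued Dirichlet series, and let p ≥ 0, q ≥ 0, m ≥ 0 be integers. Assume f is of regular relative (m,q) Ritt growth with respect to h with 0 < λ_h^{(m,q)}(f) = ρ_h^{(m,q)}(f) < +∞, and assume 0 < λ_h^{(m,p)}(g) ≤ ρ_h^{(m,p)}(g) < +∞. Then λ_g^{(p,q)}(f) = ρ_h^{(m,q)}(f)/ρ_h^{(m,p)}(g) and ρ_g^{(p,q)}(f) = ρ_h^{(m,q)}(f)/λ_h^{(m,p)}(g). If in addition ρ_h^{(m,q)}(f) = ρ_h^{(m,p)}(g), then λ_g^{(p,q)}(f) = ρ_f^{(q,p)}(g) = 1. -/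

import Mathlib

/-!
Put `x(σ) = M_g⁻¹(M_f(σ))`. Then `M_g(x(σ)) = M_f(σ)`, so
`log^[p] x(σ) / log^[q] σ = A(σ) / B(x(σ))` with `A(σ) = log^[m] M_h⁻¹(M_f σ) / log^[q] σ` and
`B(ξ) = log^[m] M_h⁻¹(M_g ξ) / log^[p] ξ`. Regularity of `f` makes `A` converge to
`ρ_h^{(m,q)}(f) > 0`, and since `σ ↦ x(σ)` maps `atTop` onto `atTop`, `B ∘ x` has the same
`liminf` and `limsup` as `B`, namely `λ_h^{(m,p)}(g)` and `ρ_h^{(m,p)}(g)`; dividing a convergent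
positive quantity by `B ∘ x` gives the two formulas. Exchanging the roles of `f` and `g` gives
`ρ_f^{(q,p)}(g) = ρ_h^{(m,p)}(g) / ρ_h^{(m,q)}(f)`.

That `M_f⁻¹` is a genuine inverse comes from `M_f` being continuous (its increments are
bounded by those of the continuous sum `∑ e^{σλₙ}‖aₙ‖`), strictly increasing where positive
(Hadamard's three lines theorem, together with `M_f(σ) → 0` as `σ → -∞`) and unbounded
(Liouville's theorem).
-/

open Filter Topology

noncomputable section

/-- An entire function given by an everywhere absolutely convergent
vector valued Dirichlet series, with coefficients in a Banach space `E`. -/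
structure VVDS (E : Type*) [NormedAddCommGroup E] [NormedSpace ℂ E] [CompleteSpace E] where
  a : ℕ → E
  lam : ℕ → ℝ
  lam_pos : ∀ n, 0 < lam n
  lam_strictMono : StrictMono lam
  lam_tendsto : Tendsto lam atTop atTop
  log_index_bound : ∃ D : ℝ, ∀ᶠ n : ℕ in atTop, Real.log (n : ℝ) / lam n ≤ D
  coeff_decay : Tendsto (fun n => Real.log ‖a n‖ / lam n) atTop atBot
  abs_conv : ∀ s : ℂ, Summable (fun n => Real.exp (s.re * lam n) * ‖a n‖)

variable {E F G : Type*} [NormedAddCommGroup E] [NormedSpace ℂ E] [CompleteSpace E]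
  [NormedAddCommGroup F] [NormedSpace ℂ F] [CompleteSpace F]
  [NormedAddCommGroup G] [NormedSpace ℂ G] [CompleteSpace G]

/-- The entire function defined by the vector valued Dirichlet series. -/
def VVDS.toFun (f : VVDS E) (s : ℂ) : E := ∑' n, Complex.exp (s * (f.lam n : ℂ)) • f.a n

/-- The maximum modulus function `M_f(σ) = sup_t ‖f(σ+it)‖`. -/
def VVDS.M (f : VVDS E) (σ : ℝ) : ℝ := ⨆ t : ℝ, ‖f.toFun ((σ : ℂ) + (t : ℂ) * Complex.I)‖

/-- The inverse function of the maximum modulus function. -/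
def VVDS.Minv (f : VVDS E) (y : ℝ) : ℝ := sInf {σ : ℝ | y ≤ f.M σ}

/-- The (p,q)-th relative Ritt order of `f` with respect to `g`. -/
def relRittOrder (p q : ℕ) (f : VVDS E) (g : VVDS F) : EReal :=
  limsup (fun σ : ℝ =>
    ((Real.log^[p] (g.Minv (f.M σ)) / Real.log^[q] σ : ℝ) : EReal)) atTop

/-- The (p,q)-th relative Ritt lower order of `f` with respect to `g`. -/
def relRittLowerOrder (p q : ℕ) (f : VVDS E) (g : VVDS F) : EReal :=
  liminf (fun σ : ℝ =>
    ((Real.log^[p] (g.Minv (f.M σ)) / Real.log^[q] σ : ℝ) : EReal)) atTop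

/-- The (p,q)-th relative Ritt type of `f` with respect to `g`. -/
def relRittType (p q : ℕ) (f : VVDS E) (g : VVDS F) : EReal :=
  limsup (fun σ : ℝ =>
    ((Real.log^[p-1] (g.Minv (f.M σ)) /
      (Real.log^[q-1] σ) ^ (relRittOrder p q f g).toReal : ℝ) : EReal)) atTop

/-- The (p,q)-th relative Ritt lower type of `f` with respect to `g`. -/
def relRittLowerType (p q : ℕ) (f : VVDS E) (g : VVDS F) : EReal :=
  liminf (fun σ : ℝ =>
    ((Real.log^[p-1] (g.Minv (f.M σ)) /
      (Real.log^[q-1] σ) ^ (relRittOrder p q f g).toReal : ℝ) : EReal)) atTop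

/-- The (p,q)-th relative Ritt weak type of `f` with respect to `g`. -/
def relRittWeakType (p q : ℕ) (f : VVDS E) (g : VVDS F) : EReal :=
  liminf (fun σ : ℝ =>
    ((Real.log^[p-1] (g.Minv (f.M σ)) /
      (Real.log^[q-1] σ) ^ (relRittLowerOrder p q f g).toReal : ℝ) : EReal)) atTop

/-- The growth indicator `τ̄_g^{(p,q)}(f)`. -/
def relRittUpperWeakType (p q : ℕ) (f : VVDS E) (g : VVDS F) : EReal :=
  limsup (fun σ : ℝ =>
    ((Real.log^[p-1] (g.Minv (f.M σ)) /
      (Real.log^[q-1] σ) ^ (relRittLowerOrder p q f g).toReal : ℝ) : EReal)) atTop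


section LimsupCoe

variable {ι : Type*} {l : Filter ι} {u v : ι → ℝ} {c L : ℝ}

theorem limsup_coe_eq_of_forall
    (hup : ∀ z : ℝ, L < z → ∀ᶠ i in l, u i < z) (hlow : ∀ z : ℝ, z < L → ∃ᶠ i in l, z < u i) :
    limsup (fun i => (u i : EReal)) l = L := by
  refine le_antisymm ((limsup_le_iff).2 fun y hy => ?_) ((le_limsup_iff).2 fun y hy => ?_)
  · induction y using EReal.rec with
    | bot => exact absurd hy not_lt_bot
    | coe z => exact (hup z (EReal.coe_lt_coe_iff.1 hy)).mono fun i hi => EReal.coe_lt_coe_iff.2 hi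
    | top => exact Eventually.of_forall fun i => EReal.coe_lt_top _
  · induction y using EReal.rec with
    | bot => exact (hlow (L - 1) (by linarith)).mono fun i _ => EReal.bot_lt_coe _
    | coe z => exact (hlow z (EReal.coe_lt_coe_iff.1 hy)).mono fun i hi => EReal.coe_lt_coe_iff.2 hi
    | top => exact absurd hy not_top_lt

theorem liminf_coe_eq_of_forall
    (hlow : ∀ z : ℝ, z < L → ∀ᶠ i in l, z < u i) (hup : ∀ z : ℝ, L < z → ∃ᶠ i in l, u i < z) :
    liminf (fun i => (u i : EReal)) l = L := by
  refine le_antisymm ((liminf_le_iff).2 fun y hy => ?_) ((le_liminf_iff).2 fun y hy => ?_)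
  · induction y using EReal.rec with
    | bot => exact absurd hy not_lt_bot
    | coe z => exact (hup z (EReal.coe_lt_coe_iff.1 hy)).mono fun i hi => EReal.coe_lt_coe_iff.2 hi
    | top => exact (hup (L + 1) (by linarith)).mono fun i _ => EReal.coe_lt_top _
  · induction y using EReal.rec with
    | bot => exact Eventually.of_forall fun i => EReal.bot_lt_coe _
    | coe z => exact (hlow z (EReal.coe_lt_coe_iff.1 hy)).mono fun i hi => EReal.coe_lt_coe_iff.2 hi
    | top => exact absurd hy not_top_lt

theorem eventually_lt_of_coe_lt_liminf {z : ℝ} (hL : liminf (fun i => (u i : EReal)) l = L)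
    (hz : z < L) : ∀ᶠ i in l, z < u i :=
  (eventually_lt_of_lt_liminf (hL ▸ EReal.coe_lt_coe_iff.2 hz)).mono
    fun _ hi => EReal.coe_lt_coe_iff.1 hi

theorem frequently_lt_of_liminf_lt_coe {z : ℝ} (hL : liminf (fun i => (u i : EReal)) l = L)
    (hz : L < z) : ∃ᶠ i in l, u i < z :=
  (frequently_lt_of_liminf_lt (by isBoundedDefault) (hL ▸ EReal.coe_lt_coe_iff.2 hz)).mono
    fun _ hi => EReal.coe_lt_coe_iff.1 hi

theorem eventually_lt_of_limsup_lt_coe {z : ℝ} (hL : limsup (fun i => (u i : EReal)) l = L)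
    (hz : L < z) : ∀ᶠ i in l, u i < z :=
  (eventually_lt_of_limsup_lt (hL ▸ EReal.coe_lt_coe_iff.2 hz)).mono
    fun _ hi => EReal.coe_lt_coe_iff.1 hi

theorem frequently_lt_of_coe_lt_limsup {z : ℝ} (hL : limsup (fun i => (u i : EReal)) l = L)
    (hz : z < L) : ∃ᶠ i in l, z < u i :=
  (frequently_lt_of_lt_limsup (by isBoundedDefault) (hL ▸ EReal.coe_lt_coe_iff.2 hz)).mono
    fun _ hi => EReal.coe_lt_coe_iff.1 hi

theorem exists_pos_between_of_lt_inv {z L : ℝ} (hL : 0 < L) (hz : z < L⁻¹) :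
    ∃ w, z ≤ w ∧ 0 < w ∧ w < L⁻¹ :=
  ⟨max z (L⁻¹ / 2), le_max_left _ _, lt_max_of_lt_right (by positivity),
    max_lt hz (half_lt_self (inv_pos.2 hL))⟩

theorem limsup_coe_inv (hL : liminf (fun i => (u i : EReal)) l = L) (hL0 : 0 < L) :
    limsup (fun i => (((u i)⁻¹ : ℝ) : EReal)) l = (L⁻¹ : ℝ) := by
  refine limsup_coe_eq_of_forall (fun z hz => ?_) (fun z hz => ?_)
  · have hz0 : 0 < z := (inv_pos.2 hL0).trans hz
    filter_upwards [eventually_lt_of_coe_lt_liminf hL ((inv_lt_comm₀ hL0 hz0).1 hz)] with i hi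
    exact (inv_lt_comm₀ hz0 ((inv_pos.2 hz0).trans hi)).1 hi
  · obtain ⟨w, hzw, hw0, hwL⟩ := exists_pos_between_of_lt_inv hL0 hz
    have hLw : L < w⁻¹ := (lt_inv_comm₀ hw0 hL0).1 hwL
    refine ((frequently_lt_of_liminf_lt_coe hL hLw).and_eventually
      (eventually_lt_of_coe_lt_liminf hL hL0)).mono fun i ⟨hi, hi0⟩ => ?_
    exact hzw.trans_lt ((lt_inv_comm₀ hw0 hi0).2 hi)

theorem liminf_coe_inv (hu : ∀ᶠ i in l, 0 < u i) (hL : limsup (fun i => (u i : EReal)) l = L)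
    (hL0 : 0 < L) : liminf (fun i => (((u i)⁻¹ : ℝ) : EReal)) l = (L⁻¹ : ℝ) := by
  refine liminf_coe_eq_of_forall (fun z hz => ?_) (fun z hz => ?_)
  · obtain ⟨w, hzw, hw0, hwL⟩ := exists_pos_between_of_lt_inv hL0 hz
    have hLw : L < w⁻¹ := (lt_inv_comm₀ hw0 hL0).1 hwL
    filter_upwards [eventually_lt_of_limsup_lt_coe hL hLw, hu] with i hi hi0
    exact hzw.trans_lt ((lt_inv_comm₀ hw0 hi0).2 hi)
  · have hz0 : 0 < z := (inv_pos.2 hL0).trans hz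
    refine (frequently_lt_of_coe_lt_limsup hL ((inv_lt_comm₀ hL0 hz0).1 hz)).mono fun i hi => ?_
    exact (inv_lt_comm₀ hz0 ((inv_pos.2 hz0).trans hi)).1 hi

theorem limsup_coe_mul_of_tendsto_left [l.NeBot] (hv : Tendsto v l (𝓝 c)) (hc : 0 < c)
    (hu : ∀ᶠ i in l, 0 ≤ u i) (hL : limsup (fun i => (u i : EReal)) l = L) :
    limsup (fun i => ((v i * u i : ℝ) : EReal)) l = (c * L : ℝ) := by
  have hv' := EReal.tendsto_coe.2 hv
  have hu' : ∀ᶠ i in l, (0 : EReal) ≤ u i := hu.mono fun _ hi => EReal.coe_nonneg.2 hi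
  have hv0 : ∀ᶠ i in l, (0 : EReal) ≤ v i :=
    (hv'.eventually_const_lt (EReal.coe_pos.2 hc)).mono fun _ hi => hi.le
  simp only [mul_comm (v _), mul_comm c, EReal.coe_mul]
  refine le_antisymm ?_ ?_
  · refine (EReal.limsup_mul_le hu'.frequently hv0 (.inr ?_) (.inl ?_)).trans_eq ?_ <;>
      simp [hL, hv'.limsup_eq]
  · exact le_of_eq_of_le (by rw [hL, hv'.liminf_eq]) (EReal.le_limsup_mul hu'.frequently hv0)

theorem liminf_coe_mul_of_tendsto_left [l.NeBot] (hv : Tendsto v l (𝓝 c)) (hc : 0 < c)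
    (hu : ∀ᶠ i in l, 0 ≤ u i) (hL : liminf (fun i => (u i : EReal)) l = L) :
    liminf (fun i => ((v i * u i : ℝ) : EReal)) l = (c * L : ℝ) := by
  have hv' := EReal.tendsto_coe.2 hv
  have hu' : ∀ᶠ i in l, (0 : EReal) ≤ u i := hu.mono fun _ hi => EReal.coe_nonneg.2 hi
  have hv0 : ∀ᶠ i in l, (0 : EReal) ≤ v i :=
    (hv'.eventually_const_lt (EReal.coe_pos.2 hc)).mono fun _ hi => hi.le
  simp only [EReal.coe_mul]
  refine le_antisymm ?_ ?_
  · refine (EReal.liminf_mul_le hv0 hu' (.inl ?_) (.inl ?_)).trans_eq ?_ <;>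
      simp [hL, hv'.limsup_eq, hc.ne']
  · exact le_of_eq_of_le (by rw [hL, hv'.liminf_eq]) (EReal.le_liminf_mul hv0 hu')

theorem limsup_coe_div_of_tendsto_left [l.NeBot] (hv : Tendsto v l (𝓝 c)) (hc : 0 < c)
    (hL : liminf (fun i => (u i : EReal)) l = L) (hL0 : 0 < L) :
    limsup (fun i => ((v i / u i : ℝ) : EReal)) l = (c / L : ℝ) := by
  simpa only [div_eq_mul_inv] using limsup_coe_mul_of_tendsto_left hv hc
    ((eventually_lt_of_coe_lt_liminf hL hL0).mono fun _ hi => (inv_pos.2 hi).le)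
    (limsup_coe_inv hL hL0)

theorem liminf_coe_div_of_tendsto_left [l.NeBot] (hv : Tendsto v l (𝓝 c)) (hc : 0 < c)
    (hu : ∀ᶠ i in l, 0 < u i) (hL : limsup (fun i => (u i : EReal)) l = L) (hL0 : 0 < L) :
    liminf (fun i => ((v i / u i : ℝ) : EReal)) l = (c / L : ℝ) := by
  simpa only [div_eq_mul_inv] using liminf_coe_mul_of_tendsto_left hv hc
    (hu.mono fun _ hi => (inv_pos.2 hi).le) (liminf_coe_inv hu hL hL0)

theorem limsup_coe_div_of_tendsto_right [l.NeBot] (hv : Tendsto v l (𝓝 c)) (hc : 0 < c)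
    (hu : ∀ᶠ i in l, 0 ≤ u i) (hL : limsup (fun i => (u i : EReal)) l = L) :
    limsup (fun i => ((u i / v i : ℝ) : EReal)) l = (L / c : ℝ) := by
  simpa only [div_eq_inv_mul] using
    limsup_coe_mul_of_tendsto_left (hv.inv₀ hc.ne') (inv_pos.2 hc) hu hL

end LimsupCoe

namespace VVDS

variable (f : VVDS E)

def normSum (σ : ℝ) : ℝ := ∑' n, Real.exp (σ * f.lam n) * ‖f.a n‖

theorem summable_normSum (σ : ℝ) : Summable fun n => Real.exp (σ * f.lam n) * ‖f.a n‖ := by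
  simpa using f.abs_conv σ

theorem norm_exp_smul (s : ℂ) (n : ℕ) :
    ‖Complex.exp (s * f.lam n) • f.a n‖ = Real.exp (s.re * f.lam n) * ‖f.a n‖ := by
  rw [norm_smul, Complex.norm_exp, Complex.re_mul_ofReal]

theorem summable_exp_smul (s : ℂ) : Summable fun n => Complex.exp (s * f.lam n) • f.a n :=
  Summable.of_norm <| (f.summable_normSum s.re).congr fun n => (f.norm_exp_smul s n).symm

theorem norm_toFun_le (s : ℂ) : ‖f.toFun s‖ ≤ f.normSum s.re :=
  tsum_of_norm_bounded (f.summable_normSum s.re).hasSum fun n => (f.norm_exp_smul s n).le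

theorem exp_mul_lam_le {σ₁ σ₂ : ℝ} (h : σ₁ ≤ σ₂) (n : ℕ) :
    Real.exp (σ₁ * f.lam n) ≤ Real.exp (σ₂ * f.lam n) :=
  Real.exp_le_exp.2 (mul_le_mul_of_nonneg_right h (f.lam_pos n).le)

theorem normSum_mono : Monotone f.normSum := fun _ _ h =>
  Summable.tsum_le_tsum (fun n => mul_le_mul_of_nonneg_right (f.exp_mul_lam_le h n)
    (norm_nonneg _)) (f.summable_normSum _) (f.summable_normSum _)

theorem continuous_normSum : Continuous f.normSum := by
  refine continuous_iff_continuousAt.2 fun σ => ?_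
  have hcont : ContinuousOn f.normSum (Set.Iio (σ + 1)) := by
    refine continuousOn_tsum (fun n => by fun_prop) (f.summable_normSum (σ + 1)) fun n τ hτ => ?_
    rw [Real.norm_of_nonneg (by positivity)]
    exact mul_le_mul_of_nonneg_right (f.exp_mul_lam_le (le_of_lt hτ) n) (norm_nonneg _)
  exact hcont.continuousAt (Iio_mem_nhds (lt_add_one σ))

theorem tendsto_normSum_atBot : Tendsto f.normSum atBot (𝓝 0) := by
  unfold normSum
  have hterm : ∀ n, Tendsto (fun σ : ℝ => Real.exp (σ * f.lam n) * ‖f.a n‖) atBot (𝓝 0) :=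
    fun n => by simpa using ((Real.tendsto_exp_atBot.comp
      (tendsto_id.atBot_mul_const (f.lam_pos n))).mul_const ‖f.a n‖)
  have hbound : ∀ᶠ σ : ℝ in atBot, ∀ n,
      ‖Real.exp (σ * f.lam n) * ‖f.a n‖‖ ≤ Real.exp (0 * f.lam n) * ‖f.a n‖ := by
    filter_upwards [eventually_le_atBot 0] with σ hσ n
    rw [Real.norm_of_nonneg (by positivity)]
    exact mul_le_mul_of_nonneg_right (f.exp_mul_lam_le hσ n) (norm_nonneg _)
  simpa using tendsto_tsum_of_dominated_convergence (f.summable_normSum 0) hterm hbound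

theorem bddAbove_range_norm (σ : ℝ) :
    BddAbove (Set.range fun t : ℝ => ‖f.toFun (σ + t * Complex.I)‖) :=
  ⟨f.normSum σ, by rintro _ ⟨t, rfl⟩; simpa using f.norm_toFun_le (σ + t * Complex.I)⟩

theorem norm_le_M (s : ℂ) : ‖f.toFun s‖ ≤ f.M s.re := by
  simpa only [M, Complex.re_add_im] using le_ciSup (f.bddAbove_range_norm s.re) s.im

theorem M_nonneg (σ : ℝ) : 0 ≤ f.M σ :=
  (norm_nonneg _).trans (by simpa using f.norm_le_M σ)

theorem M_le_normSum (σ : ℝ) : f.M σ ≤ f.normSum σ :=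
  ciSup_le fun t => by simpa using f.norm_toFun_le (σ + t * Complex.I)

theorem tendsto_M_atBot : Tendsto f.M atBot (𝓝 0) :=
  squeeze_zero f.M_nonneg f.M_le_normSum f.tendsto_normSum_atBot

theorem differentiable_toFun : Differentiable ℂ f.toFun := by
  intro z
  have hU : IsOpen (Complex.re ⁻¹' Set.Iio (z.re + 1)) := isOpen_Iio.preimage Complex.continuous_re
  have hd : DifferentiableOn ℂ f.toFun (Complex.re ⁻¹' Set.Iio (z.re + 1)) := by
    refine Complex.differentiableOn_tsum_of_summable_norm (f.summable_normSum (z.re + 1))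
      (fun n => (Differentiable.smul_const (by fun_prop) _).differentiableOn) hU fun n w hw => ?_
    rw [f.norm_exp_smul w n]
    exact mul_le_mul_of_nonneg_right (f.exp_mul_lam_le (le_of_lt hw) n) (norm_nonneg _)
  exact hd.differentiableAt (hU.mem_nhds (by simp))

open Complex.HadamardThreeLines in
theorem M_le_rpow_mul_rpow {σ₀ σ₂ u : ℝ} (h : σ₀ < σ₂) (hu₀ : 0 ≤ u) (hu₁ : u ≤ 1) :
    f.M (σ₀ + u * (σ₂ - σ₀)) ≤ f.M σ₀ ^ (1 - u) * f.M σ₂ ^ u := by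
  set d := σ₂ - σ₀
  have hd : (d : ℂ) ≠ 0 := Complex.ofReal_ne_zero.2 (sub_pos.2 h).ne'
  set F : ℂ → E := fun z => f.toFun (σ₀ + z * d)
  have hF : Differentiable ℂ F := f.differentiable_toFun.comp (by fun_prop)
  have hre : ∀ z : ℂ, ((σ₀ : ℂ) + z * d).re = σ₀ + z.re * d := fun z => by simp
  refine ciSup_le fun t => ?_
  have hz : ((σ₀ + u * d : ℝ) : ℂ) + t * Complex.I = σ₀ + (u + (t / d : ℝ) * Complex.I) * d := by
    push_cast; field_simp; ring
  rw [hz]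
  refine (norm_le_interp_of_mem_verticalClosedStrip₀₁' F (a := f.M σ₀) (b := f.M σ₂) ?_
    hF.diffContOnCl ?_ ?_ ?_).trans_eq (by simp)
  · simp [verticalClosedStrip, hu₀, hu₁]
  · refine ⟨f.normSum σ₂, ?_⟩
    rintro _ ⟨w, hw, rfl⟩
    refine (f.norm_toFun_le _).trans (f.normSum_mono ?_)
    rw [hre]
    nlinarith [hw.2, sub_pos.2 h]
  · intro w hw
    simpa [hre, show w.re = 0 from hw] using f.norm_le_M (σ₀ + w * d)
  · intro w hw
    simpa [hre, show w.re = 1 from hw, d, F] using f.norm_le_M (σ₀ + w * d)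

theorem exists_M_le_rpow_mul_rpow {σ₀ σ₁ σ₂ : ℝ} (h₀₁ : σ₀ < σ₁) (h₁₂ : σ₁ < σ₂) :
    ∃ u : ℝ, 0 < u ∧ u < 1 ∧ f.M σ₁ ≤ f.M σ₀ ^ (1 - u) * f.M σ₂ ^ u := by
  have hd : 0 < σ₂ - σ₀ := by linarith
  refine ⟨(σ₁ - σ₀) / (σ₂ - σ₀), div_pos (by linarith) hd, (div_lt_one hd).2 (by linarith), ?_⟩
  convert f.M_le_rpow_mul_rpow (u := (σ₁ - σ₀) / (σ₂ - σ₀)) (h₀₁.trans h₁₂)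
    (div_pos (by linarith) hd).le ((div_le_one hd).2 (by linarith)) using 2
  field_simp
  ring

theorem exists_lt_and_M_lt {y : ℝ} (hy : 0 < y) (σ : ℝ) : ∃ σ₀ < σ, f.M σ₀ < y :=
  ((eventually_lt_atBot σ).and (f.tendsto_M_atBot.eventually_lt_const hy)).exists

theorem M_lt_M {σ₁ σ₂ : ℝ} (h : σ₁ < σ₂) (hpos : 0 < f.M σ₂) : f.M σ₁ < f.M σ₂ := by
  obtain ⟨σ₀, hσ₀, hM₀⟩ := f.exists_lt_and_M_lt hpos σ₁
  obtain ⟨u, hu₀, hu₁, hM₁⟩ := f.exists_M_le_rpow_mul_rpow hσ₀ h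
  calc f.M σ₁ ≤ f.M σ₀ ^ (1 - u) * f.M σ₂ ^ u := hM₁
    _ < f.M σ₂ ^ (1 - u) * f.M σ₂ ^ u := by
      gcongr
      exact f.M_nonneg σ₀
    _ = f.M σ₂ := by rw [← Real.rpow_add hpos, sub_add_cancel, Real.rpow_one]

theorem monotone_M : Monotone f.M := by
  intro σ₁ σ₂ h
  rcases h.eq_or_lt with rfl | h
  · rfl
  rcases (f.M_nonneg σ₂).eq_or_lt with h0 | hpos
  · obtain ⟨u, hu₀, -, hM₁⟩ := f.exists_M_le_rpow_mul_rpow (sub_one_lt σ₁) h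
    rw [← h0, Real.zero_rpow hu₀.ne', mul_zero] at hM₁
    exact hM₁.trans h0.le
  · exact (f.M_lt_M h hpos).le

theorem norm_toFun_sub_le {σ₁ σ₂ : ℝ} (h : σ₂ ≤ σ₁) (t : ℝ) :
    ‖f.toFun (σ₁ + t * Complex.I) - f.toFun (σ₂ + t * Complex.I)‖ ≤
      f.normSum σ₁ - f.normSum σ₂ := by
  have hterm : ∀ (σ : ℝ) (n : ℕ), Complex.exp ((σ + t * Complex.I) * f.lam n) • f.a n =
      (Real.exp (σ * f.lam n) : ℂ) • Complex.exp ((t * f.lam n : ℝ) * Complex.I) • f.a n := by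
    intro σ n
    rw [smul_smul, Complex.ofReal_exp, ← Complex.exp_add]
    push_cast
    ring_nf
  rw [toFun, toFun, ← (f.summable_exp_smul _).tsum_sub (f.summable_exp_smul _)]
  refine tsum_of_norm_bounded
    ((f.summable_normSum σ₁).hasSum.sub (f.summable_normSum σ₂).hasSum) fun n => ?_
  rw [hterm, hterm, ← sub_smul, norm_smul, norm_smul, Complex.norm_exp_ofReal_mul_I, one_mul,
    ← Complex.ofReal_sub, Complex.norm_real, Real.norm_of_nonneg (sub_nonneg.2
      (f.exp_mul_lam_le h n)), sub_mul]

theorem M_sub_M_le {σ₁ σ₂ : ℝ} (h : σ₂ ≤ σ₁) :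
    f.M σ₁ - f.M σ₂ ≤ f.normSum σ₁ - f.normSum σ₂ := by
  rw [sub_le_iff_le_add']
  refine ciSup_le fun t => (norm_le_norm_add_norm_sub' _ (f.toFun (σ₂ + t * Complex.I))).trans
    (add_le_add ?_ (f.norm_toFun_sub_le h t))
  simpa using f.norm_le_M (σ₂ + t * Complex.I)

theorem dist_M_le (σ τ : ℝ) : dist (f.M σ) (f.M τ) ≤ dist (f.normSum σ) (f.normSum τ) := by
  wlog h : τ ≤ σ generalizing σ τ
  · simpa only [dist_comm] using this τ σ (le_of_not_ge h)
  rw [Real.dist_eq, Real.dist_eq, abs_of_nonneg (sub_nonneg.2 (f.monotone_M h)),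
    abs_of_nonneg (sub_nonneg.2 (f.normSum_mono h))]
  exact f.M_sub_M_le h

theorem continuous_M : Continuous f.M := by
  refine continuous_iff_continuousAt.2 fun σ => tendsto_iff_dist_tendsto_zero.2 ?_
  exact squeeze_zero (fun _ => dist_nonneg) (fun τ => f.dist_M_le τ σ)
    (tendsto_iff_dist_tendsto_zero.1 (f.continuous_normSum.tendsto σ))

theorem tendsto_M_atTop (hf : ∃ σ, 0 < f.M σ) : Tendsto f.M atTop atTop := by
  refine tendsto_atTop_atTop_of_monotone f.monotone_M fun b => ?_
  by_contra! hb
  have hbdd : Bornology.IsBounded (Set.range f.toFun) := by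
    refine (Metric.isBounded_iff_subset_closedBall 0).2 ⟨b, ?_⟩
    rintro _ ⟨s, rfl⟩
    simpa using (f.norm_le_M s).trans (hb s.re).le
  have hconst : f.M = fun _ => ‖f.toFun 0‖ := by
    ext σ
    simp only [M, f.differentiable_toFun.apply_eq_apply_of_bounded hbdd _ 0, ciSup_const]
  obtain ⟨σ, hσ⟩ := hf
  have h0 : ‖f.toFun 0‖ = 0 := tendsto_nhds_unique (hconst ▸ tendsto_const_nhds) f.tendsto_M_atBot
  simp [hconst, h0] at hσ

theorem eventually_M_pos (hf : ∃ σ, 0 < f.M σ) : ∀ᶠ σ in atTop, 0 < f.M σ :=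
  (f.tendsto_M_atTop hf).eventually_gt_atTop 0

theorem exists_M_eq (hf : ∃ σ, 0 < f.M σ) {y : ℝ} (hy : 0 < y) : ∃ σ, f.M σ = y := by
  obtain ⟨σ₀, -, hσ₀⟩ := f.exists_lt_and_M_lt hy 0
  obtain ⟨σ₁, hσ₁⟩ := ((f.tendsto_M_atTop hf).eventually_ge_atTop y).exists
  exact intermediate_value_univ σ₀ σ₁ f.continuous_M ⟨hσ₀.le, hσ₁⟩

theorem Minv_M {σ : ℝ} (hσ : 0 < f.M σ) : f.Minv (f.M σ) = σ := by
  have hset : {τ | f.M σ ≤ f.M τ} = Set.Ici σ := by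
    ext τ
    exact ⟨fun hτ => not_lt.1 fun hlt => (f.M_lt_M hlt hσ).not_ge hτ, fun hτ => f.monotone_M hτ⟩
  rw [Minv, hset, csInf_Ici]

theorem M_Minv (hf : ∃ σ, 0 < f.M σ) {y : ℝ} (hy : 0 < y) : f.M (f.Minv y) = y := by
  obtain ⟨σ, rfl⟩ := f.exists_M_eq hf hy
  rw [f.Minv_M hy]

/-- `{σ | 0 ≤ M σ}` is all of `ℝ`, whose `sInf` is the junk value `0`. -/
theorem Minv_zero : f.Minv 0 = 0 := by
  simp [Minv, f.M_nonneg]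

theorem tendsto_Minv_atTop (hf : ∃ σ, 0 < f.M σ) : Tendsto f.Minv atTop atTop := by
  refine tendsto_atTop_atTop.2 fun C => ⟨max (f.M C) 0 + 1, fun y hy => ?_⟩
  have hy₀ : 0 < y := by linarith [le_max_right (f.M C) 0]
  by_contra! hlt
  have := f.monotone_M hlt.le
  rw [f.M_Minv hf hy₀] at this
  linarith [le_max_left (f.M C) 0]

end VVDS

theorem VVDS.map_Minv_M (f : VVDS E) (g : VVDS F) (hf : ∃ σ, 0 < f.M σ) (hg : ∃ σ, 0 < g.M σ) :
    map (fun σ => g.Minv (f.M σ)) atTop = atTop := by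
  have hinv : (fun ξ => g.Minv (f.M (f.Minv (g.M ξ)))) =ᶠ[atTop] id := by
    filter_upwards [g.eventually_M_pos hg] with ξ hξ
    rw [f.M_Minv hf hξ, g.Minv_M hξ, id]
  refine le_antisymm ((g.tendsto_Minv_atTop hg).comp (f.tendsto_M_atTop hf)) ?_
  calc atTop = map (fun ξ => g.Minv (f.M (f.Minv (g.M ξ)))) atTop := by
        rw [map_congr hinv, map_id]
    _ = map (fun σ => g.Minv (f.M σ)) (map (fun ξ => f.Minv (g.M ξ)) atTop) := map_map.symm
    _ ≤ map (fun σ => g.Minv (f.M σ)) atTop :=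
        map_mono ((f.tendsto_Minv_atTop hf).comp (g.tendsto_M_atTop hg))

/-- `relRittOrder p q f g` and `relRittLowerOrder p q f g` are the `limsup` and `liminf` of this
ratio, coerced to `EReal`. -/
def rittRatio (p q : ℕ) (f : VVDS E) (g : VVDS F) (σ : ℝ) : ℝ :=
  Real.log^[p] (g.Minv (f.M σ)) / Real.log^[q] σ

section RittRatio

variable {p q m : ℕ} {f : VVDS E} {g : VVDS F} {h : VVDS G}

theorem exists_M_pos_of_relRittLowerOrder_pos (hfg : 0 < relRittLowerOrder p q f g) :
    ∃ σ, 0 < f.M σ := by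
  by_contra! hM
  have hzero : ∀ σ, rittRatio p q f g σ = 0 := fun σ => by
    rw [rittRatio, le_antisymm (hM σ) (f.M_nonneg σ), g.Minv_zero,
      Function.iterate_fixed Real.log_zero, zero_div]
  change 0 < liminf (fun σ => (rittRatio p q f g σ : EReal)) atTop at hfg
  simp [hzero] at hfg

theorem tendsto_rittRatio {c : ℝ} (hlow : relRittLowerOrder p q f g = c)
    (hup : relRittOrder p q f g = c) : Tendsto (rittRatio p q f g) atTop (𝓝 c) :=
  EReal.tendsto_coe.1 (tendsto_of_liminf_eq_limsup hlow hup)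

theorem eventuallyEq_rittRatio_div (hf : ∃ σ, 0 < f.M σ) (hg : ∃ σ, 0 < g.M σ)
    (hne : ∀ᶠ σ in atTop, rittRatio m q f h σ ≠ 0) :
    rittRatio p q f g =ᶠ[atTop]
      fun σ => rittRatio m q f h σ / rittRatio m p g h (g.Minv (f.M σ)) := by
  filter_upwards [f.eventually_M_pos hf, hne] with σ hσ hσne
  rw [rittRatio, rittRatio, rittRatio, g.M_Minv hg hσ,
    div_div_div_cancel_left' _ _ (div_ne_zero_iff.1 hσne).1]

theorem liminf_comp_Minv_M (hf : ∃ σ, 0 < f.M σ) (hg : ∃ σ, 0 < g.M σ) (u : ℝ → EReal) :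
    liminf (fun σ => u (g.Minv (f.M σ))) atTop = liminf u atTop :=
  (liminf_comp u _ atTop).trans (congrArg (liminf u) (VVDS.map_Minv_M f g hf hg))

theorem limsup_comp_Minv_M (hf : ∃ σ, 0 < f.M σ) (hg : ∃ σ, 0 < g.M σ) (u : ℝ → EReal) :
    limsup (fun σ => u (g.Minv (f.M σ))) atTop = limsup u atTop :=
  (limsup_comp u _ atTop).trans (congrArg (limsup u) (VVDS.map_Minv_M f g hf hg))

variable {c lam rho : ℝ}

theorem relRittLowerOrder_eq_div (hf : ∃ σ, 0 < f.M σ) (hg : ∃ σ, 0 < g.M σ)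
    (hα : Tendsto (rittRatio m q f h) atTop (𝓝 c)) (hc : 0 < c)
    (hlam : relRittLowerOrder m p g h = lam) (hlam0 : 0 < lam)
    (hrho : relRittOrder m p g h = rho) :
    relRittLowerOrder p q f g = (c / rho : ℝ) := by
  have hle : (lam : EReal) ≤ rho := by
    rw [← hlam, ← hrho]
    exact liminf_le_limsup
  have hγinf := (liminf_comp_Minv_M hf hg _).trans hlam
  change liminf (fun σ => (rittRatio p q f g σ : EReal)) atTop = _
  rw [liminf_congr ((eventuallyEq_rittRatio_div hf hg (hα.eventually_ne hc.ne')).mono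
    fun _ hσ => congrArg _ hσ)]
  exact liminf_coe_div_of_tendsto_left hα hc (eventually_lt_of_coe_lt_liminf hγinf hlam0)
    ((limsup_comp_Minv_M hf hg _).trans hrho) (hlam0.trans_le (EReal.coe_le_coe_iff.1 hle))

theorem relRittOrder_eq_div (hf : ∃ σ, 0 < f.M σ) (hg : ∃ σ, 0 < g.M σ)
    (hα : Tendsto (rittRatio m q f h) atTop (𝓝 c)) (hc : 0 < c)
    (hlam : relRittLowerOrder m p g h = lam) (hlam0 : 0 < lam) :
    relRittOrder p q f g = (c / lam : ℝ) := by
  change limsup (fun σ => (rittRatio p q f g σ : EReal)) atTop = _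
  rw [limsup_congr ((eventuallyEq_rittRatio_div hf hg (hα.eventually_ne hc.ne')).mono
    fun _ hσ => congrArg _ hσ)]
  exact limsup_coe_div_of_tendsto_left hα hc ((liminf_comp_Minv_M hf hg _).trans hlam) hlam0

theorem relRittOrder_swap_eq_div (hf : ∃ σ, 0 < f.M σ) (hg : ∃ σ, 0 < g.M σ)
    (hα : Tendsto (rittRatio m q f h) atTop (𝓝 c)) (hc : 0 < c)
    (hlam : relRittLowerOrder m p g h = lam) (hlam0 : 0 < lam)
    (hrho : relRittOrder m p g h = rho) :
    relRittOrder q p g f = (rho / c : ℝ) := by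
  have hβ : ∀ᶠ ξ in atTop, 0 < rittRatio m p g h ξ := eventually_lt_of_coe_lt_liminf hlam hlam0
  change limsup (fun ξ => (rittRatio q p g f ξ : EReal)) atTop = _
  rw [limsup_congr ((eventuallyEq_rittRatio_div hg hf (hβ.mono fun _ hξ => hξ.ne')).mono
    fun _ hξ => congrArg _ hξ)]
  have hy := (f.tendsto_Minv_atTop hf).comp (g.tendsto_M_atTop hg)
  exact limsup_coe_div_of_tendsto_right (hα.comp hy) hc (hβ.mono fun _ hξ => hξ.le) hrho

end RittRatio

theorem stmt_1_general (f : VVDS E) (g : VVDS F) (h : VVDS G) (p q m : ℕ)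
    (hf1 : (0 : EReal) < relRittLowerOrder m q f h)
    (hfr : relRittLowerOrder m q f h = relRittOrder m q f h)
    (hf3 : relRittOrder m q f h < ⊤)
    (hg1 : (0 : EReal) < relRittLowerOrder m p g h)
    (hg3 : relRittOrder m p g h < ⊤)
    :
    relRittLowerOrder p q f g = (((relRittOrder m q f h).toReal / (relRittOrder m p g h).toReal : ℝ) : EReal) ∧ relRittOrder p q f g = (((relRittOrder m q f h).toReal / (relRittLowerOrder m p g h).toReal : ℝ) : EReal) ∧ (relRittOrder m q f h = relRittOrder m p g h → relRittLowerOrder p q f g = 1 ∧ relRittOrder q p g f = 1) := by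
  have hfM := exists_M_pos_of_relRittLowerOrder_pos hf1
  have hgM := exists_M_pos_of_relRittLowerOrder_pos hg1
  have hf0 := hf1.trans_eq hfr
  have hg2 : relRittLowerOrder m p g h ≤ relRittOrder m p g h := liminf_le_limsup
  have hc := (EReal.coe_toReal hf3.ne hf0.ne_bot).symm
  have hlam := (EReal.coe_toReal (hg2.trans_lt hg3).ne hg1.ne_bot).symm
  have hrho := (EReal.coe_toReal hg3.ne (hg1.trans_le hg2).ne_bot).symm
  have hc0 := EReal.toReal_pos hf0 hf3.ne
  have hlam0 := EReal.toReal_pos hg1 (hg2.trans_lt hg3).ne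
  have hrho0 := EReal.toReal_pos (hg1.trans_le hg2) hg3.ne
  have hα := tendsto_rittRatio (hfr.trans hc) hc
  have hlower := relRittLowerOrder_eq_div hfM hgM hα hc0 hlam hlam0 hrho
  refine ⟨hlower, relRittOrder_eq_div hfM hgM hα hc0 hlam hlam0, fun hcρ => ⟨?_, ?_⟩⟩
  · rw [hlower, hcρ, div_self hrho0.ne', EReal.coe_one]
  · rw [relRittOrder_swap_eq_div hfM hgM hα hc0 hlam hlam0 hrho, hcρ, div_self hrho0.ne',
      EReal.coe_one]

theorem stmt_1 (f : VVDS E) (g : VVDS F) (h : VVDS G) (p q m : ℕ)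
    (hf1 : (0 : EReal) < relRittLowerOrder m q f h)
    (hfr : relRittLowerOrder m q f h = relRittOrder m q f h)
    (hf3 : relRittOrder m q f h < ⊤)
    (hg1 : (0 : EReal) < relRittLowerOrder m p g h)
    (hg2 : relRittLowerOrder m p g h ≤ relRittOrder m p g h)
    (hg3 : relRittOrder m p g h < ⊤)
    :
    relRittLowerOrder p q f g = (((relRittOrder m q f h).toReal / (relRittOrder m p g h).toReal : ℝ) : EReal) ∧ relRittOrder p q f g = (((relRittOrder m q f h).toReal / (relRittLowerOrder m p g h).toReal : ℝ) : EReal) ∧ (relRittOrder m q f h = relRittOrder m p g h → relRittLowerOrder p q f g = 1 ∧ relRittOrder q p g f = 1) :=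
  stmt_1_general f g h p q m hf1 hfr hf3 hg1 hg3
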